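/- arXiv:1104.5221 — 4 statements merged into one kernel-verified Lean document; each statement's English description precedes it below -/
import Mathlib

section
/- If a linear function A: ℝ^k → ℝ with non-negative coefficients is strictly positive on every standard basis vector, then A attains its infimum on any nonempty closed polyhedron contained in the non-negative orthant, and if the polyhedron is rational the minimum is attained at a rational point (so the minimum value is rational). -/
open Matrix Filter Topology Set

/-!
Because every `aᵢ > 0`, the sublevel sets of `A` on the orthant are compact, so `A` attains its
minimum on the closed set `Q`. The minimizers form an exposed, hence extreme, compact face of `Q`;
by Krein–Milman it has an extreme point `x`, which is then an extreme point of `Q`. At an extreme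
point of a polyhedron no nonzero direction is annihilated by all active constraints, so `x` is the
unique solution of the active equations; when these have rational coefficients, a rational left
inverse of their matrix shows that `x` is rational.
-/

theorem Matrix.exists_mul_eq_one_of_injective_mulVec {K ι n : Type*} [Field K] [Fintype ι]
    [Fintype n] [DecidableEq n] {M : Matrix ι n K} (hM : Function.Injective M.mulVec) :
    ∃ L : Matrix n ι K, L * M = 1 := by
  classical
  obtain ⟨g, hg⟩ := (toLin' M).exists_leftInverse_of_injective (LinearMap.ker_eq_bot.mpr hM)
  refine ⟨LinearMap.toMatrix' g, ?_⟩
  simpa [LinearMap.toMatrix'_comp] using congrArg LinearMap.toMatrix' hg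

theorem Matrix.exists_eq_comp_of_map_mulVec_eq {K S ι n : Type*} [Field K] [CommRing S]
    [Fintype ι] [Fintype n] (f : K →+* S) {M : Matrix ι n K} (hM : Function.Injective M.mulVec)
    {b : ι → K} {x : n → S} (hx : M.map f *ᵥ x = f ∘ b) : ∃ q : n → K, x = f ∘ q := by
  classical
  obtain ⟨L, hL⟩ := exists_mul_eq_one_of_injective_mulVec hM
  refine ⟨L *ᵥ b, ?_⟩
  calc x = (L * M).map f *ᵥ x := by simp [hL]
    _ = L.map f *ᵥ (f ∘ b) := by rw [Matrix.map_mul, ← mulVec_mulVec, hx]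
    _ = f ∘ (L *ᵥ b) := funext fun i => (RingHom.map_mulVec f L b i).symm

variable {ι n : Type*} [Fintype n]

def polyhedron (c : ι → n → ℝ) (d : ι → ℝ) : Set (n → ℝ) := {u | ∀ j, c j ⬝ᵥ u ≤ d j}

theorem isClosed_polyhedron (c : ι → n → ℝ) (d : ι → ℝ) : IsClosed (polyhedron c d) := by
  simp only [polyhedron, ofPred_forall]
  exact isClosed_iInter fun j => isClosed_le (continuous_const.dotProduct continuous_id)
    continuous_const

theorem eventually_add_smul_mem_polyhedron [Finite ι] {c : ι → n → ℝ} {d : ι → ℝ} {x v : n → ℝ}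
    (hx : x ∈ polyhedron c d) (hv : ∀ j, c j ⬝ᵥ x = d j → c j ⬝ᵥ v = 0) :
    ∀ᶠ t : ℝ in 𝓝 0, x + t • v ∈ polyhedron c d := by
  refine eventually_all.2 fun j => ?_
  simp only [dotProduct_add, dotProduct_smul, smul_eq_mul]
  rcases (hx j).eq_or_lt with hj | hj
  · exact .of_forall fun t => by simp [hv j hj, hj]
  · have hcont : Continuous fun t : ℝ => c j ⬝ᵥ x + t * c j ⬝ᵥ v := by fun_prop
    exact (hcont.continuousAt.eventually_lt continuousAt_const (by simpa using hj)).mono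
      fun _ => le_of_lt

theorem eq_zero_of_mem_extremePoints_polyhedron [Finite ι] {c : ι → n → ℝ} {d : ι → ℝ}
    {x v : n → ℝ} (hx : x ∈ (polyhedron c d).extremePoints ℝ)
    (hv : ∀ j, c j ⬝ᵥ x = d j → c j ⬝ᵥ v = 0) : v = 0 := by
  have hv' : ∀ j, c j ⬝ᵥ x = d j → c j ⬝ᵥ -v = 0 := fun j hj => by
    rw [dotProduct_neg, hv j hj, neg_zero]
  obtain ⟨t, ⟨hplus, hminus⟩, ht⟩ : ∃ t : ℝ, (x + t • v ∈ polyhedron c d ∧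
      x + t • -v ∈ polyhedron c d) ∧ 0 < t :=
    ((((eventually_add_smul_mem_polyhedron hx.1 hv).and
      (eventually_add_smul_mem_polyhedron hx.1 hv')).filter_mono nhdsWithin_le_nhds).and
      (self_mem_nhdsWithin (s := Ioi 0))).exists
  have hseg : x ∈ openSegment ℝ (x + t • v) (x + t • -v) :=
    ⟨1 / 2, 1 / 2, by norm_num, by norm_num, by norm_num, by module⟩
  simpa [ht.ne'] using hx.2 hplus hminus hseg

theorem exists_rat_eq_of_mem_extremePoints_polyhedron [Finite ι] {c : ι → n → ℝ} {d : ι → ℝ}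
    (hc : ∀ j i, ∃ q : ℚ, c j i = q) (hd : ∀ j, ∃ q : ℚ, d j = q) {x : n → ℝ}
    (hx : x ∈ (polyhedron c d).extremePoints ℝ) : ∀ i, ∃ q : ℚ, x i = q := by
  classical
  choose cq hcq using hc
  choose dq hdq using hd
  have := Fintype.ofFinite ι
  let M : Matrix {j // c j ⬝ᵥ x = d j} n ℚ := .of fun j => cq j
  have hM : Function.Injective M.mulVecLin := by
    refine (injective_iff_map_eq_zero _).2 fun w hw => ?_
    have hw' : ((↑) ∘ w : n → ℝ) = 0 := eq_zero_of_mem_extremePoints_polyhedron hx fun j hj => by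
      have := congrFun hw ⟨j, hj⟩
      simp [dotProduct, hcq]
      exact_mod_cast this
    ext i
    simpa using congrFun hw' i
  have hMc : ∀ j, M.map (Rat.castHom ℝ) j = c j := fun j => funext fun i => (hcq j i).symm
  obtain ⟨q, hq⟩ := M.exists_eq_comp_of_map_mulVec_eq (Rat.castHom ℝ) hM
    (b := fun j => dq j) (x := x) (funext fun j => (congrArg (· ⬝ᵥ x) (hMc j)).trans (j.2.trans (hdq j)))
  exact fun i => ⟨q i, congrFun hq i⟩

theorem isCompact_setOf_nonneg_dotProduct_le {a : n → ℝ} (ha : ∀ i, 0 < a i) (r : ℝ) :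
    IsCompact {u : n → ℝ | 0 ≤ u ∧ a ⬝ᵥ u ≤ r} := by
  refine (isCompact_univ_pi fun i => isCompact_Icc (a := 0) (b := r / a i)).of_isClosed_subset
    ((isClosed_le continuous_const continuous_id).inter
      (isClosed_le (continuous_const.dotProduct continuous_id) continuous_const)) ?_
  rintro u ⟨hu, hur⟩ i -
  refine ⟨hu i, (le_div_iff₀ (ha i)).2 ?_⟩
  calc u i * a i = a i * u i := mul_comm _ _
    _ ≤ a ⬝ᵥ u := Finset.single_le_sum (f := fun i => a i * u i)
        (fun i _ => mul_nonneg (ha i).le (hu i)) (Finset.mem_univ i)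
    _ ≤ r := hur

theorem exists_isMinOn_of_isCompact_sublevel {α β : Type*} [LinearOrder α] [TopologicalSpace α]
    [ClosedIicTopology α] [TopologicalSpace β] {f : β → α} {s : Set β} {x₀ : β} (hx₀ : x₀ ∈ s)
    (hK : IsCompact (s ∩ {x | f x ≤ f x₀})) (hf : ContinuousOn f (s ∩ {x | f x ≤ f x₀})) :
    ∃ z ∈ s, IsMinOn f s z := by
  obtain ⟨z, ⟨hzs, -⟩, hz⟩ := hK.exists_isMinOn ⟨x₀, hx₀, le_rfl⟩ hf
  refine ⟨z, hzs, fun y hy => ?_⟩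
  rcases le_total (f y) (f x₀) with h | h
  · exact hz ⟨hy, h⟩
  · exact (hz ⟨hx₀, le_rfl⟩).trans h

theorem exists_mem_extremePoints_isMinOn {E : Type*} [AddCommGroup E] [Module ℝ E]
    [TopologicalSpace E] [T2Space E] [IsTopologicalAddGroup E] [ContinuousSMul ℝ E]
    [LocallyConvexSpace ℝ E] (ℓ : StrongDual ℝ E) {s : Set E} (hs : IsClosed s) {x₀ : E}
    (hx₀ : x₀ ∈ s) (hK : IsCompact (s ∩ {x | ℓ x ≤ ℓ x₀})) :
    ∃ x ∈ s.extremePoints ℝ, IsMinOn ℓ s x := by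
  obtain ⟨z, hzs, hz⟩ := exists_isMinOn_of_isCompact_sublevel hx₀ hK ℓ.continuous.continuousOn
  have hF : IsExposed ℝ s ((-ℓ).toExposed s) := ContinuousLinearMap.toExposed.isExposed
  have hzF : z ∈ (-ℓ).toExposed s := ⟨hzs, fun y hy => neg_le_neg (hz hy)⟩
  have hFK : (-ℓ).toExposed s ⊆ s ∩ {x | ℓ x ≤ ℓ x₀} := fun x hx =>
    ⟨hx.1, (neg_le_neg_iff.1 (hx.2 z hzs)).trans (hz hx₀)⟩
  obtain ⟨x, hx⟩ := (hK.of_isClosed_subset (hF.isClosed hs) hFK).extremePoints_nonempty ⟨z, hzF⟩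
  exact ⟨x, hF.isExtreme.extremePoints_subset_extremePoints hx,
    fun y hy => neg_le_neg_iff.1 (hx.1.2 y hy)⟩

/-- If a linear function `A(u) = Σ aᵢ uᵢ` with non-negative coefficients is strictly
positive on every standard basis vector (i.e. `aᵢ > 0` for all `i`), then `A`
attains its infimum on any nonempty closed polyhedron `Q` (cut out by finitely many
linear inequalities) contained in the non-negative orthant; and if the polyhedron
is rational, the minimum is attained at a rational point, so the minimum value is
rational. -/
theorem linear_attains_min_on_polyhedron_in_orthant
    (k m : ℕ) (a : Fin k → ℝ) (ha : ∀ i, 0 < a i)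
    (c : Fin m → Fin k → ℝ) (d : Fin m → ℝ)
    (Q : Set (Fin k → ℝ))
    (hQ : Q = {u | ∀ j, ∑ i, c j i * u i ≤ d j})
    (horth : Q ⊆ {u | ∀ i, 0 ≤ u i})
    (hne : Q.Nonempty) :
    (∃ u' ∈ Q, IsLeast {r : ℝ | ∃ u ∈ Q, r = ∑ i, a i * u i} (∑ i, a i * u' i)) ∧
    ((∀ j i, ∃ q : ℚ, c j i = (q : ℝ)) → (∀ j, ∃ q : ℚ, d j = (q : ℝ)) →
      ∃ u' ∈ Q, (∀ i, ∃ q : ℚ, u' i = (q : ℝ)) ∧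
        IsLeast {r : ℝ | ∃ u ∈ Q, r = ∑ i, a i * u i} (∑ i, a i * u' i) ∧
        (∀ hq : ∀ i, ∃ q : ℚ, a i = (q : ℝ), ∃ q : ℚ, (∑ i, a i * u' i) = (q : ℝ))) := by
  subst hQ
  obtain ⟨u₀, hu₀⟩ := hne
  let ℓ : StrongDual ℝ (Fin k → ℝ) := ∑ i, a i • ContinuousLinearMap.proj i
  have hℓ : ∀ u, ℓ u = a ⬝ᵥ u := fun u => by simp [ℓ, dotProduct]
  have hQc := isClosed_polyhedron c d
  have hK : IsCompact (polyhedron c d ∩ {u | ℓ u ≤ ℓ u₀}) :=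
    (isCompact_setOf_nonneg_dotProduct_le ha (ℓ u₀)).of_isClosed_subset
      (hQc.inter (isClosed_le ℓ.continuous continuous_const))
      fun u hu => ⟨horth hu.1, (hℓ u).symm.trans_le hu.2⟩
  obtain ⟨x, hx, hmin⟩ := exists_mem_extremePoints_isMinOn ℓ hQc hu₀ hK
  have hleast : IsLeast {r | ∃ u ∈ polyhedron c d, r = ∑ i, a i * u i} (∑ i, a i * x i) :=
    ⟨⟨x, hx.1, rfl⟩, by
      rintro _ ⟨u, hu, rfl⟩
      show a ⬝ᵥ x ≤ a ⬝ᵥ u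
      simpa only [hℓ] using isMinOn_iff.1 hmin u hu⟩
  refine ⟨⟨x, hx.1, hleast⟩, fun hc hd => ?_⟩
  have hxq := exists_rat_eq_of_mem_extremePoints_polyhedron hc hd hx
  refine ⟨x, hx.1, hxq, hleast, fun haq => ?_⟩
  choose aq haq using haq
  choose xq hxq using hxq
  exact ⟨∑ i, aq i * xq i, by simp [haq, hxq]⟩
end

section
/- For any vertex v of the turn graph and any taut admissible surface S with weight vector u(S), F_v(u(S)) = n(S); in particular F_v(u(S)) = F_{v'}(u(S)) for all vertices v, v'. -/
/-!
Projecting the edge traversals of the turn circuits to either endpoint gives the same multiset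
of vertex visits. The handle involution `(i, j) ↦ (j + 1, i - 1)` preserves the traversals, so
visits to `v + 1` are as frequent as visits to `v`: the `n·ℓ` visits are spread evenly over the
`ℓ` vertices, and each `F_v` counts the visits to `v`.
-/

/-- Edge relation of the turn graph Γ(w). -/
def TurnEdge {β : Type*} {ℓ : ℕ} (x : ZMod ℓ → FreeGroup β) (i j : ZMod ℓ) : Prop :=
  (x i)⁻¹ = x (j + 1)

/-- The duality involution on edges: `(i,j) ↦ (j+1, i-1)`. -/
def dualEdge {ℓ : ℕ} (e : ZMod ℓ × ZMod ℓ) : ZMod ℓ × ZMod ℓ :=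
  (e.2 + 1, e.1 - 1)

/-- A closed directed walk, as the cyclic list of visited vertices. -/
def IsClosedWalk {V : Type*} (Adj : V → V → Prop) (l : List V) : Prop :=
  l ≠ [] ∧ ∀ p ∈ l.zip (l.rotate 1), Adj p.1 p.2

/-- The multiset of directed edges traversed by the circuit `l`. -/
def cycEdges {V : Type*} (l : List V) : Multiset (V × V) :=
  (l.zip (l.rotate 1) : List (V × V))

/-- Combinatorial model of a taut admissible surface (cf. the paper): turn circuits
are embedded circuits in the turn graph and the 1-handles pair edge-traversals in
dual pairs. -/
structure TautAdmSurface (ℓ : ℕ) (Edge : ZMod ℓ → ZMod ℓ → Prop) where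
  circuits : Multiset (List (ZMod ℓ))
  nonempty : circuits ≠ 0
  closed : ∀ c ∈ circuits, IsClosedWalk Edge c
  embedded : ∀ c ∈ circuits, c.Nodup
  handles : Multiset.map dualEdge (circuits.bind cycEdges) = circuits.bind cycEdges

/-- `F_v(u) = Σᵢ uᵢ · (number of times the embedded circuit αᵢ passes through v)`. -/
def Fvert {ℓ k : ℕ} (α : Fin k → List (ZMod ℓ)) (u : Fin k → ℕ) (v : ZMod ℓ) : ℕ :=
  ∑ i, u i * (α i).count v

section Circuits

variable {V : Type*}

theorem cycEdges_map_fst (l : List V) : (cycEdges l).map Prod.fst = l := by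
  rw [cycEdges, Multiset.map_coe, List.map_fst_zip (l.length_rotate 1).ge]

theorem cycEdges_map_snd (l : List V) : (cycEdges l).map Prod.snd = l := by
  rw [cycEdges, Multiset.map_coe, List.map_snd_zip (l.length_rotate 1).le]
  exact Multiset.coe_eq_coe.mpr (l.rotate_perm 1)

theorem bind_cycEdges_map_fst (C : Multiset (List V)) :
    (C.bind cycEdges).map Prod.fst = C.bind (↑) := by
  simp only [Multiset.map_bind, cycEdges_map_fst]

theorem bind_cycEdges_map_snd (C : Multiset (List V)) :
    (C.bind cycEdges).map Prod.snd = C.bind (↑) := by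
  simp only [Multiset.map_bind, cycEdges_map_snd]

end Circuits

theorem ZMod.apply_eq_of_periodic_one {ℓ : ℕ} {γ : Type*} {f : ZMod ℓ → γ}
    (hf : Function.Periodic f 1) (a b : ZMod ℓ) : f a = f b := by
  obtain ⟨m, hm⟩ := ZMod.intCast_surjective (a - b)
  simpa [hm] using hf.int_mul m b

theorem count_map_fst_add_one_of_map_dualEdge {ℓ : ℕ} {T : Multiset (ZMod ℓ × ZMod ℓ)}
    (hT : T.map dualEdge = T) (v : ZMod ℓ) :
    (T.map Prod.fst).count (v + 1) = (T.map Prod.snd).count v := by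
  nth_rw 1 [← hT]
  rw [Multiset.map_map,
    show (Prod.fst ∘ dualEdge : ZMod ℓ × ZMod ℓ → ZMod ℓ) = (· + 1) ∘ Prod.snd from rfl,
    ← Multiset.map_map, Multiset.count_map_eq_count' _ _ (add_left_injective 1)]

theorem Fvert_eq_count_bind {ℓ k : ℕ} (α : Fin k → List (ZMod ℓ)) (u : Fin k → ℕ)
    (v : ZMod ℓ) :
    Fvert α u v = ((∑ i, u i • {α i} : Multiset (List (ZMod ℓ))).bind (↑)).count v := by
  rw [Multiset.count_bind, ← Multiset.coe_mapAddMonoidHom, map_sum,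
    ← Multiset.coe_sumAddMonoidHom, map_sum]
  simp [Fvert, Multiset.nsmul_singleton]

namespace TautAdmSurface

variable {ℓ : ℕ} {Edge : ZMod ℓ → ZMod ℓ → Prop} (S : TautAdmSurface ℓ Edge)

def vertexVisits : Multiset (ZMod ℓ) :=
  S.circuits.bind (↑)

theorem periodic_count_vertexVisits : Function.Periodic (S.vertexVisits.count ·) 1 := fun v => by
  have h := count_map_fst_add_one_of_map_dualEdge S.handles v
  rwa [bind_cycEdges_map_fst, bind_cycEdges_map_snd] at h

theorem card_vertexVisits :
    Multiset.card S.vertexVisits = Multiset.card (S.circuits.bind cycEdges) := by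
  rw [vertexVisits, ← bind_cycEdges_map_fst, Multiset.card_map]

theorem count_vertexVisits_eq_of_card_eq {n : ℕ} (hℓ : 0 < ℓ)
    (hcard : Multiset.card (S.circuits.bind cycEdges) = n * ℓ) (v : ZMod ℓ) :
    S.vertexVisits.count v = n := by
  have : NeZero ℓ := ⟨hℓ.ne'⟩
  have hsum : ∑ w : ZMod ℓ, S.vertexVisits.count w = ℓ * S.vertexVisits.count v := by
    rw [Finset.sum_congr rfl fun w _ =>
        ZMod.apply_eq_of_periodic_one S.periodic_count_vertexVisits w v,
      Finset.sum_const, Finset.card_univ, ZMod.card, smul_eq_mul]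
  rw [Multiset.sum_count_eq_card fun w _ => Finset.mem_univ w, card_vertexVisits, hcard,
    mul_comm] at hsum
  exact (Nat.eq_of_mul_eq_mul_left hℓ hsum).symm

end TautAdmSurface

theorem Fvert_eq_degree_general
    {β : Type*} {ℓ k : ℕ} (hℓ : 0 < ℓ) (x : ZMod ℓ → FreeGroup β)
    (α : Fin k → List (ZMod ℓ))
    (S : TautAdmSurface ℓ (TurnEdge x)) (n : ℕ)
    (hdeg : Multiset.card (S.circuits.bind cycEdges) = n * ℓ)
    (u : Fin k → ℕ)
    (hu : S.circuits = ∑ i, u i • ({α i} : Multiset (List (ZMod ℓ)))) :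
    (∀ v : ZMod ℓ, Fvert α u v = n) ∧
    (∀ v v' : ZMod ℓ, Fvert α u v = Fvert α u v') := by
  have hFvert : ∀ v, Fvert α u v = n := fun v => by
    rw [Fvert_eq_count_bind, ← hu]
    exact S.count_vertexVisits_eq_of_card_eq hℓ hdeg v
  exact ⟨hFvert, fun v v' => (hFvert v).trans (hFvert v').symm⟩

/-- For any vertex `v` of the turn graph and any taut admissible surface `S` (with
boundary labeled `w^{n}`, so that the total number of handle traversals is `n·|w|`)
with weight vector `u = u(S)`, one has `F_v(u(S)) = n(S)`; in particular
`F_v(u(S)) = F_{v'}(u(S))` for all vertices `v, v'`. -/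
theorem Fvert_eq_degree
    {β : Type*} {ℓ k : ℕ} (hℓ : 0 < ℓ) (x : ZMod ℓ → FreeGroup β)
    (hred : ∀ i : ZMod ℓ, (x i)⁻¹ ≠ x (i + 1))
    (α : Fin k → List (ZMod ℓ))
    (hα : ∀ i, IsClosedWalk (TurnEdge x) (α i) ∧ (α i).Nodup)
    (S : TautAdmSurface ℓ (TurnEdge x)) (n : ℕ)
    (hdeg : Multiset.card (S.circuits.bind cycEdges) = n * ℓ)
    (u : Fin k → ℕ)
    (hu : S.circuits = ∑ i, u i • ({α i} : Multiset (List (ZMod ℓ)))) :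
    (∀ v : ZMod ℓ, Fvert α u v = n) ∧
    (∀ v v' : ZMod ℓ, Fvert α u v = Fvert α u v') :=
  Fvert_eq_degree_general hℓ x α S n hdeg u hu
end

section
/- Turn surgery on an admissible surface at two occurrences of the same turn preserves n(S) and χ(S₀), and changes the number of inner boundary components |π₀(∂⁻S₀)| by exactly ±1: it increases by 1 if the two occurrences lie on the same inner boundary component and decreases by 1 otherwise. (Combinatorial model: cutting and regluing a pair of points on a disjoint union of circles splits one circle into two or merges two circles into one.) -/
/-!
Write `τ = σ * swap p q`; it agrees with `σ` except that `τ p = σ q` and `τ q = σ p`. Follow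
the `σ`-orbit of `σ q` until it first hits `{p, q}`: up to that moment it is also the
`τ`-orbit of `p`. If it hits `q`, then `p` and `q` lie on different `σ`-cycles and `τ` fuses
them into one; if it hits `p`, the `τ`-orbit of `p` closes up before reaching `q`. Cycles of
`σ` avoiding `p` and `q` are cycles of `τ`, so in the first case exactly two cycles become one.
As `τ * swap p q = σ`, the second case is the first one read backwards.
-/

/-- The number of cycles (orbits, including fixed points) of a permutation: the
inner boundary `∂⁻S₀` is modeled as a disjoint union of circles, i.e. the cycles of
a permutation of the finite set of marked points (occurrences of turns). -/
noncomputable def numCycles {M : Type*} (σ : Equiv.Perm M) : ℕ :=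
  Nat.card (Quotient (⟨σ.SameCycle,
    ⟨fun m => Equiv.Perm.SameCycle.refl σ m,
     fun h => h.symm, fun h h' => h.trans h'⟩⟩ : Setoid M))

open Equiv Function

theorem Function.Surjective.card_eq_add_one_of_injOn {α β : Type*} [Finite α] {f : α → β}
    (hf : Surjective f) {a b : α} (hab : a ≠ b) (hfab : f a = f b) (hinj : Set.InjOn f {b}ᶜ) :
    Nat.card α = Nat.card β + 1 := by
  have himage : f '' {b}ᶜ = Set.univ := by
    refine Set.eq_univ_of_forall fun y => ?_
    obtain ⟨x, rfl⟩ := hf y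
    by_cases hx : x = b
    · exact ⟨a, hab, hx ▸ hfab⟩
    · exact ⟨x, hx, rfl⟩
  rw [← Set.ncard_univ β, ← himage, hinj.ncard_image, ← Set.ncard_univ α,
    ← Set.ncard_sdiff_singleton_add_one (Set.mem_univ b), Set.compl_eq_univ_sdiff]

theorem Setoid.card_quotient_eq_add_one {α : Type*} [Finite α] {r s : Setoid α} (hle : r ≤ s)
    {a b : α} (hr : ¬r a b) (hs : s a b) (hmerge : ∀ x y, s x y → ¬r x b → ¬r y b → r x y) :
    Nat.card (Quotient r) = Nat.card (Quotient s) + 1 := by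
  refine Surjective.card_eq_add_one_of_injOn (f := Quotient.map' id hle)
    (Quotient.ind fun x => ⟨⟦x⟧, rfl⟩) (a := ⟦a⟧) (b := ⟦b⟧)
    (fun h => hr (Quotient.exact h)) (Quotient.sound hs) ?_
  rintro ⟨x⟩ hx ⟨y⟩ hy hxy
  exact Quotient.sound (hmerge x y (Quotient.exact hxy) (fun h => hx (Quotient.sound h))
    (fun h => hy (Quotient.sound h)))

namespace Equiv.Perm

variable {α : Type*}

theorem pow_apply_eq_pow_apply_of_forall_lt {f g : Perm α} {x : α} {k : ℕ}
    (h : ∀ i < k, f ((g ^ i) x) = g ((g ^ i) x)) : (f ^ k) x = (g ^ k) x := by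
  induction k with
  | zero => rfl
  | succ k ih =>
    rw [pow_succ', mul_apply, ih fun i hi => h i (hi.trans k.lt_succ_self), h k k.lt_succ_self,
      ← mul_apply, ← pow_succ']

section Swap

variable [DecidableEq α] {σ : Perm α} {p q : α}

theorem mul_swap_apply_of_ne_of_ne {x : α} (hp : x ≠ p) (hq : x ≠ q) :
    (σ * swap p q) x = σ x := by
  rw [mul_apply, swap_apply_of_ne_of_ne hp hq]

theorem sameCycle_mul_swap_of_sameCycle_apply (hpq : (σ * swap p q).SameCycle p q) (x : α) :
    (σ * swap p q).SameCycle x (σ x) := by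
  rw [show σ x = (σ * swap p q) (swap p q x) by simp, sameCycle_apply_right, swap_apply_def]
  split_ifs with hxp hxq
  · exact hxp ▸ hpq
  · exact hxq ▸ hpq.symm
  · exact .rfl

end Swap

variable [Finite α]

theorem sameCycle_iff_exists_nat_pow_apply_eq {f : Perm α} {x y : α} :
    f.SameCycle x y ↔ ∃ k : ℕ, (f ^ k) x = y :=
  ⟨SameCycle.exists_nat_pow_eq, fun ⟨_, hk⟩ => hk ▸ sameCycle_pow_right.2 .rfl⟩

theorem not_sameCycle_of_pow_apply_eq_self {f : Perm α} {x y : α} {n : ℕ} (hn : 0 < n)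
    (hper : (f ^ n) x = x) (hy : ∀ i < n, (f ^ i) x ≠ y) : ¬f.SameCycle x y := by
  intro h
  obtain ⟨k, rfl⟩ := h.exists_nat_pow_eq
  have hper' : IsPeriodicPt f n x := by rwa [IsPeriodicPt, IsFixedPt, ← coe_pow]
  exact hy (k % n) (Nat.mod_lt k hn) (by rw [coe_pow, coe_pow, hper'.iterate_mod_apply])

theorem SameCycle.of_forall_sameCycle_apply {f g : Perm α} (hfg : ∀ x, g.SameCycle x (f x))
    {x y : α} (h : f.SameCycle x y) : g.SameCycle x y := by
  obtain ⟨k, rfl⟩ := h.exists_nat_pow_eq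
  induction k with
  | zero => exact .rfl
  | succ k ih =>
    rw [pow_succ', mul_apply]
    exact (ih (sameCycle_pow_right.2 .rfl)).trans (hfg _)

variable [DecidableEq α] {σ : Perm α} {p q : α}

theorem sameCycle_mul_swap_iff_of_not_sameCycle {x y : α} (hp : ¬σ.SameCycle x p)
    (hq : ¬σ.SameCycle x q) : (σ * swap p q).SameCycle x y ↔ σ.SameCycle x y := by
  have hpow : ∀ k : ℕ, ((σ * swap p q) ^ k) x = (σ ^ k) x := fun k =>
    pow_apply_eq_pow_apply_of_forall_lt fun i _ => mul_swap_apply_of_ne_of_ne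
      (fun h => hp (h ▸ sameCycle_pow_right.2 .rfl)) (fun h => hq (h ▸ sameCycle_pow_right.2 .rfl))
  simp only [sameCycle_iff_exists_nat_pow_apply_eq, hpow]

theorem sameCycle_mul_swap_iff (hpq : p ≠ q) :
    (σ * swap p q).SameCycle p q ↔ ¬σ.SameCycle p q := by
  set τ := σ * swap p q
  -- `n + 1` is the first time the `σ`-orbit of `q` comes back to `{p, q}`
  have hret : ∃ n : ℕ, (σ ^ n) (σ q) = p ∨ (σ ^ n) (σ q) = q :=
    (sameCycle_apply_left.2 (SameCycle.refl σ q)).exists_nat_pow_eq.imp fun _ => Or.inr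
  set n := Nat.find hret
  have hmin : ∀ i < n, (σ ^ i) (σ q) ≠ p ∧ (σ ^ i) (σ q) ≠ q := fun i hi => by
    simpa only [not_or] using Nat.find_min hret hi
  have hwalk : ∀ i ≤ n, (τ ^ (i + 1)) p = (σ ^ (i + 1)) q := fun i hi => by
    simp only [τ, pow_succ, mul_apply, swap_apply_left]
    exact pow_apply_eq_pow_apply_of_forall_lt fun j hj =>
      (hmin j (by omega)).elim mul_swap_apply_of_ne_of_ne
  rcases Nat.find_spec hret with hp | hq
  · refine iff_of_false (not_sameCycle_of_pow_apply_eq_self n.succ_pos ?_ fun i hi => ?_)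
      (not_not.2 (sameCycle_iff_exists_nat_pow_apply_eq.2 ⟨n + 1, ?_⟩).symm)
    · rw [hwalk n le_rfl, pow_succ, mul_apply, hp]
    · cases i with
      | zero => exact hpq
      | succ j => rw [hwalk j (by omega), pow_succ, mul_apply]; exact (hmin j (by omega)).2
    · rw [pow_succ, mul_apply, hp]
  · refine iff_of_true (sameCycle_iff_exists_nat_pow_apply_eq.2 ⟨n + 1, ?_⟩)
      fun h => not_sameCycle_of_pow_apply_eq_self n.succ_pos ?_ (fun i hi => ?_) h.symm
    · rw [hwalk n le_rfl, pow_succ, mul_apply, hq]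
    · rw [pow_succ, mul_apply, hq]
    · cases i with
      | zero => exact hpq.symm
      | succ j => rw [pow_succ, mul_apply]; exact (hmin j (by omega)).1

end Equiv.Perm

theorem numCycles_eq_numCycles_mul_swap_add_one {M : Type*} [Finite M] [DecidableEq M]
    {σ : Perm M} {p q : M} (hpq : p ≠ q) (h : ¬σ.SameCycle p q) :
    numCycles σ = numCycles (σ * swap p q) + 1 := by
  have hτ : (σ * swap p q).SameCycle p q := (Perm.sameCycle_mul_swap_iff hpq).2 h
  refine Setoid.card_quotient_eq_add_one (r := Perm.SameCycle.setoid σ)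
    (s := Perm.SameCycle.setoid (σ * swap p q))
    (fun _ _ => Perm.SameCycle.of_forall_sameCycle_apply
      (Perm.sameCycle_mul_swap_of_sameCycle_apply hτ)) h hτ fun x y hxy hxq hyq => ?_
  by_cases hxp : σ.SameCycle x p
  · by_cases hyp : σ.SameCycle y p
    · exact hxp.trans hyp.symm
    · exact ((Perm.sameCycle_mul_swap_iff_of_not_sameCycle hyp hyq).1 hxy.symm).symm
  · exact (Perm.sameCycle_mul_swap_iff_of_not_sameCycle hxp hxq).1 hxy

theorem turn_surgery_changes_components_by_one_general
    {M : Type*} [Fintype M] [DecidableEq M]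
    (σ : Equiv.Perm M)
    (p q : M) (hpq : p ≠ q) :
    numCycles (σ * Equiv.swap p q) =
      (if σ.SameCycle p q then numCycles σ + 1 else numCycles σ - 1) := by
  split_ifs with h
  · have hsplit : ¬(σ * swap p q).SameCycle p q :=
      fun h' => (Perm.sameCycle_mul_swap_iff hpq).1 h' h
    simpa only [mul_swap_mul_self] using numCycles_eq_numCycles_mul_swap_add_one hpq hsplit
  · have := numCycles_eq_numCycles_mul_swap_add_one hpq h
    omega

/-- Turn surgery at two occurrences `p ≠ q` of the same turn (same label) is the
oriented cut-and-reglue exchanging the strands at the two points, i.e. replacing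
the circle permutation `σ` by `σ * swap p q`.  The marked point set — hence `n(S)`
and `χ(S₀)` — is unchanged, and the number of inner boundary components changes by
exactly `±1`: it increases by 1 if `p` and `q` lie on the same circle of `σ`, and
decreases by 1 otherwise. -/
theorem turn_surgery_changes_components_by_one
    {M : Type*} [Fintype M] [DecidableEq M] {ℓ : ℕ}
    (σ : Equiv.Perm M) (lab : M → ZMod ℓ)
    (p q : M) (hpq : p ≠ q) (hlab : lab p = lab q) :
    numCycles (σ * Equiv.swap p q) =
      (if σ.SameCycle p q then numCycles σ + 1 else numCycles σ - 1) :=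
  turn_surgery_changes_components_by_one_general σ p q hpq
end

section
/- Suppose scl(w) = inf{A(u)/B(u) : u ∈ P ∩ ℤ^k} where A, B are integer-coefficient linear forms, B > 0 on P, P is a rational polyhedral cone intersected with {u ≥ 0}, and A is positive on basis vectors. Then scl(w) is rational and there exists u* ∈ P ∩ ℤ^k achieving the infimum. -/
/-- Rational points are dense in the real solution set of a homogeneous rational
linear system, preserving vanishing coordinates. -/
lemma exists_rat_approx_solution (k m : ℕ) (C : Fin m → Fin k → ℚ) (xs : Fin k → ℝ)
    (hx : ∀ j, ∑ i, (C j i : ℝ) * xs i = 0) (ε : ℝ) (hε : 0 < ε) :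
    ∃ y : Fin k → ℚ, (∀ j, ∑ i, C j i * y i = 0) ∧ (∀ i, xs i = 0 → y i = 0) ∧
      ∀ i, |(y i : ℝ) - xs i| < ε := by
  classical
  set β := Module.Basis.ofVectorSpace ℚ ℝ with hβ
  set F : Finset (Module.Basis.ofVectorSpaceIndex ℚ ℝ) :=
    (Finset.univ : Finset (Fin k)).biUnion (fun i => (β.repr (xs i)).support) with hF
  set c : Fin k → (Module.Basis.ofVectorSpaceIndex ℚ ℝ) → ℚ := fun i α => β.repr (xs i) α with hc
  have hxs : ∀ i, xs i = ∑ α ∈ F, (c i α : ℝ) * (β α) := by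
    intro i
    conv_lhs => rw [← β.linearCombination_repr (xs i)]
    rw [Finsupp.linearCombination_apply]
    rw [Finsupp.sum_of_support_subset _
      (show (β.repr (xs i)).support ⊆ F from fun α hα =>
        Finset.mem_biUnion.2 ⟨i, Finset.mem_univ i, hα⟩) _
      (by intro α _; exact zero_smul ℚ _)]
    exact Finset.sum_congr rfl (fun α _ => Rat.smul_def _ _)
  have heq : ∀ j α, ∑ i, C j i * c i α = 0 := by
    intro j α
    have h0 : (∑ i, (C j i : ℚ) • xs i) = 0 := by
      rw [← hx j]
      exact Finset.sum_congr rfl fun i _ => (Rat.smul_def _ _).symm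
    have := congrArg (fun z => β.repr z α) h0
    simpa [map_sum, Finsupp.smul_apply, smul_eq_mul, c] using this
  set S₀ : ℝ := ∑ α ∈ F, ∑ i, |(c i α : ℝ)| with hS₀
  have hS₀0 : 0 ≤ S₀ :=
    Finset.sum_nonneg fun α _ => Finset.sum_nonneg fun i _ => abs_nonneg _
  set δ : ℝ := ε / (S₀ + 1) with hδdef
  have hδ : 0 < δ := div_pos hε (by linarith)
  have hchoice : ∀ α : Module.Basis.ofVectorSpaceIndex ℚ ℝ, ∃ q : ℚ, |(β α : ℝ) - q| < δ :=
    fun α => exists_rat_near _ hδ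
  choose t ht using hchoice
  refine ⟨fun i => ∑ α ∈ F, t α * c i α, ?_, ?_, ?_⟩
  · intro j
    have hsw : ∑ i, C j i * ∑ α ∈ F, t α * c i α
        = ∑ α ∈ F, t α * ∑ i, C j i * c i α := by
      simp only [Finset.mul_sum]
      rw [Finset.sum_comm]
      exact Finset.sum_congr rfl fun α _ => Finset.sum_congr rfl fun i _ => by ring
    show ∑ i, C j i * ∑ α ∈ F, t α * c i α = 0
    rw [hsw]
    exact Finset.sum_eq_zero fun α _ => by rw [heq, mul_zero]
  · intro i hi
    refine Finset.sum_eq_zero fun α _ => ?_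
    have : c i α = 0 := by simp [c, hi]
    rw [this, mul_zero]
  · intro i
    have hyi : ((∑ α ∈ F, t α * c i α : ℚ) : ℝ) = ∑ α ∈ F, (t α : ℝ) * (c i α : ℝ) := by
      push_cast; ring
    rw [hyi, hxs i, ← Finset.sum_sub_distrib]
    have h1 : ∀ α ∈ F, |(t α : ℝ) * (c i α : ℝ) - (c i α : ℝ) * β α|
        ≤ δ * |(c i α : ℝ)| := by
      intro α _
      have : (t α : ℝ) * (c i α : ℝ) - (c i α : ℝ) * β α
          = ((t α : ℝ) - β α) * (c i α : ℝ) := by ring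
      rw [this, abs_mul]
      have := (ht α)
      rw [abs_sub_comm] at this
      exact mul_le_mul_of_nonneg_right this.le (abs_nonneg _)
    calc |∑ α ∈ F, ((t α : ℝ) * (c i α : ℝ) - (c i α : ℝ) * β α)|
        ≤ ∑ α ∈ F, |(t α : ℝ) * (c i α : ℝ) - (c i α : ℝ) * β α| :=
          Finset.abs_sum_le_sum_abs _ _
      _ ≤ ∑ α ∈ F, δ * |(c i α : ℝ)| := Finset.sum_le_sum h1
      _ ≤ δ * S₀ := by
          rw [← Finset.mul_sum]
          refine mul_le_mul_of_nonneg_left ?_ hδ.le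
          refine Finset.sum_le_sum fun α _ => ?_
          exact Finset.single_le_sum (f := fun i' => |(c i' α : ℝ)|)
            (fun i' _ => abs_nonneg _) (Finset.mem_univ i)
      _ < ε := by
          rw [hδdef, div_mul_eq_mul_div, div_lt_iff₀ (by linarith)]
          nlinarith

/-- Suppose `scl(w) = inf {A(u)/B(u) : u ∈ P ∩ ℤ^k}`, where `A, B` are
integer-coefficient linear forms, `B > 0` on `P`, `P` is a rational polyhedral cone
(cut out by homogeneous integer linear equations) intersected with `{u ≥ 0}` and
`{B > 0}`, and `A` is strictly positive on the standard basis vectors.  Then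
`scl(w)` is rational, and there exists `u* ∈ P ∩ ℤ^k` achieving the infimum. -/
theorem scl_rational_and_attained
    (k m : ℕ) (a b : Fin k → ℤ) (C : Fin m → Fin k → ℤ)
    (A B : (Fin k → ℝ) → ℝ)
    (hA : ∀ u, A u = ∑ i, (a i : ℝ) * u i)
    (hB : ∀ u, B u = ∑ i, (b i : ℝ) * u i)
    (hApos : ∀ i, 0 < a i)
    (P : Set (Fin k → ℝ))
    (hP : P = {u | (∀ j, ∑ i, (C j i : ℝ) * u i = 0) ∧ (∀ i, 0 ≤ u i) ∧ 0 < B u})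
    (hne : ∃ u ∈ P, ∀ i, ∃ z : ℤ, u i = (z : ℝ))
    (scl : ℝ)
    (hscl : scl = sInf {r : ℝ | ∃ u ∈ P, (∀ i, ∃ z : ℤ, u i = (z : ℝ)) ∧
      r = A u / B u}) :
    (∃ q : ℚ, scl = (q : ℝ)) ∧
    (∃ u' ∈ P, (∀ i, ∃ z : ℤ, u' i = (z : ℝ)) ∧ A u' / B u' = scl) := by
  classical
  -- linearity helpers
  have hlinsmul : ∀ (f : Fin k → ℝ) (c : ℝ) (u : Fin k → ℝ),
      ∑ i, f i * (c • u) i = c * ∑ i, f i * u i := by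
    intro f c u
    rw [Finset.mul_sum]
    exact Finset.sum_congr rfl fun i _ => by simp [Pi.smul_apply]; ring
  have hlinadd : ∀ (f : Fin k → ℝ) (u v : Fin k → ℝ),
      ∑ i, f i * (u + v) i = (∑ i, f i * u i) + ∑ i, f i * v i := by
    intro f u v
    rw [← Finset.sum_add_distrib]
    exact Finset.sum_congr rfl fun i _ => by simp [Pi.add_apply]; ring
  have hAsmul : ∀ (c : ℝ) (u : Fin k → ℝ), A (c • u) = c * A u := by
    intro c u; rw [hA, hA, hlinsmul]
  have hBsmul : ∀ (c : ℝ) (u : Fin k → ℝ), B (c • u) = c * B u := by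
    intro c u; rw [hB, hB, hlinsmul]
  have hAadd : ∀ u v, A (u + v) = A u + A v := by
    intro u v; rw [hA, hA, hA, hlinadd]
  have hBadd : ∀ u v, B (u + v) = B u + B v := by
    intro u v; rw [hB, hB, hB, hlinadd]
  -- the normalized feasible set
  set Q : Set (Fin k → ℝ) :=
    {x | (∀ j, ∑ i, (C j i : ℝ) * x i = 0) ∧ (∀ i, 0 ≤ x i) ∧ B x = 1} with hQ
  obtain ⟨u₀, hu₀P, hu₀int⟩ := hne
  have hu₀P' := hu₀P
  rw [hP] at hu₀P'
  obtain ⟨hu₀C, hu₀nn, hu₀B⟩ := hu₀P'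
  -- normalization map : P → Q
  have hnorm : ∀ u, u ∈ P → (B u)⁻¹ • u ∈ Q := by
    intro u huP
    rw [hP] at huP
    obtain ⟨huC, hunn, huB⟩ := huP
    refine ⟨fun j => ?_, fun i => ?_, ?_⟩
    · rw [hlinsmul, huC, mul_zero]
    · exact mul_nonneg (inv_nonneg.2 huB.le) (hunn i)
    · rw [hBsmul, inv_mul_cancel₀ huB.ne']
  set x₀ : Fin k → ℝ := (B u₀)⁻¹ • u₀ with hx₀
  have hx₀Q : x₀ ∈ Q := hnorm u₀ hu₀P
  -- coercivity: on the nonnegative orthant, each coordinate is at most A x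
  have hcoer : ∀ x : Fin k → ℝ, (∀ i, 0 ≤ x i) → ∀ i, x i ≤ A x := by
    intro x hx i
    rw [hA]
    calc x i ≤ ∑ j, x j :=
          Finset.single_le_sum (fun j _ => hx j) (Finset.mem_univ i)
      _ ≤ ∑ j, (a j : ℝ) * x j := by
          refine Finset.sum_le_sum fun j _ => ?_
          refine le_mul_of_one_le_left (hx j) ?_
          exact_mod_cast hApos j
  -- continuity
  have hAcont : Continuous A := by
    have : A = fun u => ∑ i, (a i : ℝ) * u i := funext hA
    rw [this]
    exact continuous_finset_sum _ fun i _ => continuous_const.mul (continuous_apply i)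
  have hBcont : Continuous B := by
    have : B = fun u => ∑ i, (b i : ℝ) * u i := funext hB
    rw [this]
    exact continuous_finset_sum _ fun i _ => continuous_const.mul (continuous_apply i)
  -- compact truncation
  set K : Set (Fin k → ℝ) := Q ∩ {x | A x ≤ A x₀} with hK
  have hKclosed : IsClosed K := by
    have h1 : K = (⋂ j, {x : Fin k → ℝ | ∑ i, (C j i : ℝ) * x i = 0}) ∩
        ((⋂ i, {x : Fin k → ℝ | 0 ≤ x i}) ∩
          ({x : Fin k → ℝ | B x = 1} ∩ {x : Fin k → ℝ | A x ≤ A x₀})) := by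
      ext x
      simp only [hK, hQ, Set.mem_inter_iff, Set.mem_setOf_eq, Set.mem_iInter]
      tauto
    rw [h1]
    refine (isClosed_iInter fun j => isClosed_eq
      (continuous_finset_sum _ fun i _ => continuous_const.mul (continuous_apply i))
      continuous_const).inter
      (((isClosed_iInter fun i => isClosed_le continuous_const (continuous_apply i)).inter
        ((isClosed_eq hBcont continuous_const).inter
          (isClosed_le hAcont continuous_const))))
  have hKbdd : Bornology.IsBounded K := by
    rw [isBounded_iff_forall_norm_le]
    refine ⟨max (A x₀) 0, fun x hx => ?_⟩
    obtain ⟨⟨_, hxnn, _⟩, hxA⟩ := hx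
    rw [pi_norm_le_iff_of_nonneg (le_max_right _ _)]
    intro i
    rw [Real.norm_eq_abs, abs_of_nonneg (hxnn i)]
    exact le_max_of_le_left ((hcoer x hxnn i).trans hxA)
  have hKcompact : IsCompact K := Metric.isCompact_of_isClosed_isBounded hKclosed hKbdd
  have hKne : K.Nonempty := ⟨x₀, hx₀Q, show A x₀ ≤ A x₀ from le_rfl⟩
  obtain ⟨xs, hxsK, hxsmin⟩ := hKcompact.exists_isMinOn hKne hAcont.continuousOn
  obtain ⟨hxsC, hxsnn, hxsB⟩ := hxsK.1
  set μ : ℝ := A xs with hμ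
  -- global minimality on Q
  have hmin : ∀ z ∈ Q, μ ≤ A z := by
    intro z hz
    by_cases h : A z ≤ A x₀
    · exact hxsmin ⟨hz, h⟩
    · have h1 : μ ≤ A x₀ := hxsmin ⟨hx₀Q, show A x₀ ≤ A x₀ from le_rfl⟩
      linarith [not_le.1 h]
  -- key perturbation: A - μB vanishes on the tangent cone directions
  have hkey : ∀ v : Fin k → ℝ, (∀ j, ∑ i, (C j i : ℝ) * v i = 0) →
      (∀ i, xs i = 0 → v i = 0) → A v = μ * B v := by
    intro v hvC hv0
    have hev : ∀ᶠ t : ℝ in nhds 0, (∀ i, 0 ≤ xs i + t * v i) ∧ 0 < 1 + t * B v := by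
      refine Filter.Eventually.and ?_ ?_
      · rw [Filter.eventually_all]
        intro i
        rcases (hxsnn i).lt_or_eq with hpos | hzero
        · have hc : Continuous fun t : ℝ => xs i + t * v i :=
            continuous_const.add (continuous_id.mul continuous_const)
          have ht : Filter.Tendsto (fun t : ℝ => xs i + t * v i) (nhds 0)
              (nhds (xs i)) := by
            have := hc.tendsto 0
            simpa using this
          exact ht.eventually (eventually_ge_nhds hpos)
        · refine Filter.Eventually.of_forall fun t => ?_
          rw [← hzero, hv0 i hzero.symm, mul_zero, add_zero]
      · have hc : Continuous fun t : ℝ => 1 + t * B v :=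
          continuous_const.add (continuous_id.mul continuous_const)
        have ht : Filter.Tendsto (fun t : ℝ => 1 + t * B v) (nhds 0) (nhds 1) := by
          have := hc.tendsto 0
          simpa using this
        exact ht.eventually (eventually_gt_nhds one_pos)
    obtain ⟨ε, hεpos, hball⟩ := Metric.eventually_nhds_iff.1 hev
    have hstep : ∀ t : ℝ, dist t 0 < ε → 0 ≤ t * (A v - μ * B v) := by
      intro t htd
      obtain ⟨h1, h2⟩ := hball htd
      set z : Fin k → ℝ := xs + t • v with hz
      have hBz : B z = 1 + t * B v := by
        rw [hz, hBadd, hBsmul, hxsB]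
      have hAz : A z = μ + t * A v := by
        rw [hz, hAadd, hAsmul, hμ]
      have hzP : z ∈ P := by
        rw [hP]
        refine ⟨fun j => ?_, fun i => ?_, ?_⟩
        · rw [hz, hlinadd, hlinsmul, hxsC j, hvC j, mul_zero, add_zero]
        · simpa [hz, Pi.add_apply, Pi.smul_apply] using h1 i
        · rw [hBz]; exact h2
      have hBzpos : 0 < B z := by rw [hBz]; exact h2
      have hq : (B z)⁻¹ • z ∈ Q := hnorm z hzP
      have := hmin _ hq
      rw [hAsmul] at this
      have h3 : μ * B z ≤ A z := by
        have h4 : μ ≤ A z / B z := by rwa [div_eq_inv_mul]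
        calc μ * B z ≤ (A z / B z) * B z :=
              mul_le_mul_of_nonneg_right h4 hBzpos.le
          _ = A z := div_mul_cancel₀ _ hBzpos.ne'
      rw [hAz, hBz] at h3
      nlinarith
    have hp := hstep (ε / 2) (by rw [Real.dist_eq, sub_zero, abs_of_pos (by linarith)]; linarith)
    have hn := hstep (-(ε / 2)) (by
      rw [Real.dist_eq, sub_zero, abs_of_neg (by linarith)]; linarith)
    nlinarith
  -- choice of ε
  set pf : Finset (Fin k) := Finset.univ.filter (fun i => 0 < xs i) with hpf
  set ε₁ : ℝ := if h : pf.Nonempty then pf.inf' h xs else 1 with hε₁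
  have hε₁pos : 0 < ε₁ := by
    rw [hε₁]
    split_ifs with h
    · rw [Finset.lt_inf'_iff]
      intro i hi
      exact (Finset.mem_filter.1 hi).2
    · exact one_pos
  have hε₁le : ∀ i, 0 < xs i → ε₁ ≤ xs i := by
    intro i hi
    have hmem : i ∈ pf := Finset.mem_filter.2 ⟨Finset.mem_univ i, hi⟩
    rw [hε₁, dif_pos ⟨i, hmem⟩]
    exact Finset.inf'_le _ hmem
  set Sb : ℝ := ∑ i, |(b i : ℝ)| with hSb
  have hSb0 : 0 ≤ Sb := Finset.sum_nonneg fun i _ => abs_nonneg _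
  set ε : ℝ := min ε₁ (1 / (2 * (Sb + 1))) with hε
  have hεpos : 0 < ε := lt_min hε₁pos (by positivity)
  -- apply the density lemma
  obtain ⟨y, hyC, hy0, hynear⟩ := exists_rat_approx_solution k m
    (fun j i => (C j i : ℚ)) xs (by intro j; push_cast; exact hxsC j) ε hεpos
  set Y : Fin k → ℝ := fun i => (y i : ℝ) with hY
  have hYC : ∀ j, ∑ i, (C j i : ℝ) * Y i = 0 := by
    intro j
    have := hyC j
    have h2 : ((∑ i, (C j i : ℚ) * y i : ℚ) : ℝ) = ∑ i, (C j i : ℝ) * Y i := by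
      push_cast; rfl
    rw [← h2, this, Rat.cast_zero]
  have hY0 : ∀ i, xs i = 0 → Y i = 0 := by
    intro i hi; rw [hY]; simp [hy0 i hi]
  have hYnn : ∀ i, 0 ≤ Y i := by
    intro i
    rcases (hxsnn i).lt_or_eq with hpos | hzero
    · have := hynear i
      have h1 : ε ≤ xs i := le_trans (min_le_left _ _) (hε₁le i hpos)
      have := abs_lt.1 (hynear i)
      linarith [this.1]
    · rw [hY0 i hzero.symm]
  have hBYpos : 0 < B Y := by
    have hdiff : |B Y - 1| ≤ Sb * ε := by
      rw [← hxsB, hB Y, hB xs, ← Finset.sum_sub_distrib]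
      calc |∑ i, ((b i : ℝ) * Y i - (b i : ℝ) * xs i)|
          ≤ ∑ i, |(b i : ℝ) * Y i - (b i : ℝ) * xs i| := Finset.abs_sum_le_sum_abs _ _
        _ ≤ ∑ i, |(b i : ℝ)| * ε := by
            refine Finset.sum_le_sum fun i _ => ?_
            rw [← mul_sub, abs_mul]
            exact mul_le_mul_of_nonneg_left (hynear i).le (abs_nonneg _)
        _ = Sb * ε := by rw [← Finset.sum_mul]
    have hε2 : ε ≤ 1 / (2 * (Sb + 1)) := min_le_right _ _
    have h3 : Sb * ε ≤ Sb / (2 * (Sb + 1)) := by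
      rw [div_eq_mul_one_div]
      exact mul_le_mul_of_nonneg_left hε2 hSb0
    have h4 : Sb / (2 * (Sb + 1)) < 1 / 2 := by
      rw [div_lt_div_iff₀ (by positivity) (by norm_num)]
      nlinarith
    have := abs_lt.1 (lt_of_le_of_lt hdiff (lt_of_le_of_lt h3 h4))
    linarith [this.1]
  have hYP : Y ∈ P := by
    rw [hP]; exact ⟨hYC, hYnn, hBYpos⟩
  have hAY : A Y = μ * B Y := hkey Y hYC hY0
  have hAYdiv : A Y / B Y = μ := by
    rw [hAY, mul_div_assoc, div_self hBYpos.ne', mul_one]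
  -- rationality of μ
  have hμrat : ∃ q : ℚ, (q : ℝ) = μ := by
    refine ⟨(∑ i, (a i : ℚ) * y i) / (∑ i, (b i : ℚ) * y i), ?_⟩
    rw [← hAYdiv, Rat.cast_div]
    congr 1
    · rw [hA]; push_cast; rfl
    · rw [hB]; push_cast; rfl
  -- clear denominators
  set N : ℕ := ∏ i, (y i).den with hN
  have hNpos : 0 < N := Finset.prod_pos fun i _ => (y i).pos
  have hNR : (0 : ℝ) < (N : ℝ) := by exact_mod_cast hNpos
  set u' : Fin k → ℝ := (N : ℝ) • Y with hu'
  have hu'int : ∀ i, ∃ z : ℤ, u' i = (z : ℝ) := by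
    intro i
    obtain ⟨c, hc⟩ : (y i).den ∣ N :=
      Finset.dvd_prod_of_mem (fun i => (y i).den) (Finset.mem_univ i)
    refine ⟨(y i).num * c, ?_⟩
    have hden : ((y i).den : ℚ) ≠ 0 := Nat.cast_ne_zero.2 (y i).den_nz
    have h3 : (y i) * ((y i).den : ℚ) = (y i).num := by
      nth_rewrite 1 [← Rat.num_div_den (y i)]
      exact div_mul_cancel₀ _ hden
    have h2 : ((y i).num * c : ℚ) = (N : ℚ) * y i := by
      push_cast [hc]
      rw [← h3]; ring
    have : ((N : ℚ) * y i : ℚ) = (((y i).num * c : ℤ) : ℚ) := by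
      rw [← h2]; push_cast; ring
    have h4 := congrArg (fun q : ℚ => (q : ℝ)) this
    simp only [Rat.cast_mul, Rat.cast_natCast, Rat.cast_intCast] at h4
    simpa [hu', hY, Pi.smul_apply, smul_eq_mul] using h4
  have hu'P : u' ∈ P := by
    rw [hP]
    rw [hP] at hYP
    obtain ⟨hc1, hc2, hc3⟩ := hYP
    refine ⟨fun j => ?_, fun i => ?_, ?_⟩
    · rw [hu', hlinsmul, hc1, mul_zero]
    · exact mul_nonneg hNR.le (hc2 i)
    · rw [hu', hBsmul]
      exact mul_pos hNR hc3
  have hu'div : A u' / B u' = μ := by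
    rw [hu', hAsmul, hBsmul, mul_div_mul_left _ _ hNR.ne', hAYdiv]
  -- conclusion
  set S : Set ℝ := {r : ℝ | ∃ u ∈ P, (∀ i, ∃ z : ℤ, u i = (z : ℝ)) ∧ r = A u / B u}
    with hS
  have hμS : μ ∈ S := ⟨u', hu'P, hu'int, hu'div.symm⟩
  have hlbS : ∀ r ∈ S, μ ≤ r := by
    rintro r ⟨u, huP, -, rfl⟩
    have huB : 0 < B u := by
      rw [hP] at huP; exact huP.2.2
    have hq := hnorm u huP
    have := hmin _ hq
    rw [hAsmul] at this
    rwa [div_eq_inv_mul]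
  have hsclμ : scl = μ := by
    rw [hscl]
    exact IsLeast.csInf_eq ⟨hμS, hlbS⟩
  obtain ⟨q, hq⟩ := hμrat
  exact ⟨⟨q, by rw [hsclμ, hq]⟩, u', hu'P, hu'int, by rw [hu'div, hsclμ]⟩
end
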